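/- Let y be a process such that each y_τ is 𝓕_τ-measurable and integrable, and y_τ = φ_0(τ) + Σ_{m=1}^p φ_m(τ) y_{τ−m} + u_τ almost surely for every τ ∈ ℤ, where u_τ = ε_τ + Σ_{j=1}^q θ_j(τ) ε_{τ−j}. Then for every t ∈ ℤ and every integer N ≥ 1, almost surely E[y_t | 𝓕_{t−N}] = Σ_{r=0}^{N−1} ξ_{t,r} φ_0(t−r) + ξ_{t,N} y_{t−N} + Σ_{m=1}^{p−1} Σ_{i=1}^{p−m} φ_{m+i}(t−N+i) ξ_{t,N−i} y_{t−N−m} + Σ_{r=N}^{N+q−1} ξ'_{t,r} ε_{t−r}. -/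

import Mathlib

open Finset

/-- The `k × k` solution matrix `Φ_{t,k}`: its (1-based) `(i,j)` entry is `-1` if `i = j-1`,
`φ_{1+i−j}(t−k+i)` if `0 ≤ i−j ≤ p−1`, and `0` otherwise. -/
noncomputable def PhiMat (p : ℕ) (φ : ℕ → ℤ → ℝ) (t : ℤ) (k : ℕ) :
    Matrix (Fin k) (Fin k) ℝ :=
  fun i j =>
    if (i : ℕ) + 1 = (j : ℕ) then -1
    else if (j : ℕ) ≤ (i : ℕ) ∧ (i : ℕ) - (j : ℕ) + 1 ≤ p then
      φ ((i : ℕ) - (j : ℕ) + 1) (t - (k : ℤ) + (i : ℕ) + 1)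
    else 0

/-- The Hessenbergian (Green function) `ξ_{t,k} = det Φ_{t,k}`, with the conventions
`ξ_{t,0} = 1` (empty determinant) and `ξ_{t,k} = 0` for `k < 0`. -/
noncomputable def xi (p : ℕ) (φ : ℕ → ℤ → ℝ) (t : ℤ) (k : ℤ) : ℝ :=
  if 0 ≤ k then (PhiMat p φ t k.toNat).det else 0

/-!
Substituting the defining recursion successively for `y_t, y_{t-1}, …, y_{t-N+1}` writes `y_t`,
path by path, as an `𝓕_{t-N}`-measurable expression (the predictor) plus
`∑_{r<N} ψ_{t,r} ε_{t-r}`; the martingale-difference property kills the second part under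
`E[· | 𝓕_{t-N}]`. The coefficients produced by each substitution are again Hessenbergians because
`ξ_{t,k}` obeys the same recursion `ξ_{t,k} = ∑_{m=1}^p φ_m(t-k+m) ξ_{t,k-m}` for `k ≥ 1`.
-/

open MeasureTheory Filter

lemma sum_Icc_one_eq_sum_range {M : Type*} [AddCommMonoid M] (f : ℕ → M) (n : ℕ) :
    ∑ i ∈ Icc 1 n, f i = ∑ i ∈ range n, f (i + 1) := by
  rw [range_eq_Ico, Finset.sum_Ico_add', zero_add, Ico_add_one_right_eq_Icc]

lemma sum_Icc_add_eq_sum_range {M : Type*} [AddCommMonoid M] (f : ℕ → M) (a n : ℕ) :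
    ∑ i ∈ Icc a (a + n), f i = ∑ k ∈ range (n + 1), f (a + k) := by
  rw [← Ico_add_one_right_eq_Icc, sum_Ico_eq_sum_range, show a + n + 1 - a = n + 1 by omega]

lemma sum_range_succ_of_eq_zero {M : Type*} [AddCommMonoid M] {f : ℕ → M} {n : ℕ}
    (h : f n = 0) : ∑ i ∈ range (n + 1), f i = ∑ i ∈ range n, f i := by
  rw [sum_range_succ, h, add_zero]

section Hessenbergian

variable (p : ℕ) (φ : ℕ → ℤ → ℝ) (t : ℤ)

lemma xi_natCast (k : ℕ) : xi p φ t k = (PhiMat p φ t k).det := by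
  simp [xi]

lemma xi_of_neg {k : ℤ} (hk : k < 0) : xi p φ t k = 0 := by
  simp [xi, not_le.2 hk]

@[simp] lemma xi_zero : xi p φ t 0 = 1 := by
  simp [xi]

lemma PhiMat_succ_succ (k : ℕ) (i j : Fin k) :
    PhiMat p φ t (k + 1) i.succ j.succ = PhiMat p φ t k i j := by
  simp only [PhiMat, Fin.val_succ]
  split_ifs <;> try (first | rfl | omega)
  congr 1 <;> [omega; (push_cast; omega)]

lemma PhiMat_zero_succ_succ (k : ℕ) (j : Fin k) :
    PhiMat p φ t (k + 2) 0 j.succ.succ = 0 := by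
  simp [PhiMat]

lemma PhiMat_apply_zero (n : ℕ) (i : Fin (n + 1)) :
    PhiMat p φ t (n + 1) i 0 = if (i : ℕ) < p then φ (i + 1) (t - n + i) else 0 := by
  simp only [PhiMat, Fin.val_zero, Nat.add_eq_zero_iff, one_ne_zero, and_false, if_false,
    zero_le, true_and, Nat.sub_zero, Nat.add_one_le_iff]
  split_ifs <;> first | rfl | (congr 1; push_cast; ring)

/-- The `i` rows above row `i` each contribute a factor `-1`: expanding along the first row peels
them off one at a time, leaving `Φ_{t,n-i}`. -/
lemma det_PhiMat_submatrix_succAbove_succ (n : ℕ) (i : Fin (n + 1)) :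
    ((PhiMat p φ t (n + 1)).submatrix i.succAbove Fin.succ).det
      = (-1) ^ (i : ℕ) * xi p φ t (n - i : ℕ) := by
  induction n with
  | zero =>
    fin_cases i
    simp
  | succ n ih =>
    cases i using Fin.cases with
    | zero =>
      have h : (PhiMat p φ t (n + 2)).submatrix Fin.succ Fin.succ = PhiMat p φ t (n + 1) := by
        ext r c
        exact PhiMat_succ_succ p φ t (n + 1) r c
      simpa [h] using (xi_natCast p φ t (n + 1)).symm
    | succ j =>
      set M := (PhiMat p φ t (n + 2)).submatrix j.succ.succAbove Fin.succ
      have hrow (c : Fin (n + 1)) : M 0 c = if c = 0 then -1 else 0 := by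
        cases c using Fin.cases with
        | zero => simp [M, PhiMat]
        | succ c => simp [M, PhiMat_zero_succ_succ]
      have hminor : M.submatrix Fin.succ Fin.succ
          = (PhiMat p φ t (n + 1)).submatrix j.succAbove Fin.succ := by
        ext r c
        simp only [M, Matrix.submatrix_apply, Fin.succ_succAbove_succ]
        exact PhiMat_succ_succ p φ t (n + 1) _ _
      rw [Matrix.det_succ_row_zero, Fin.sum_univ_succ,
        sum_eq_zero (fun c _ => by simp [hrow])]
      simp only [hrow, Fin.succAbove_zero, hminor, ih, Fin.val_succ, if_true]
      simp [pow_succ, Nat.add_sub_add_right]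

/-- Cofactor expansion along the first column. -/
lemma xi_natCast_succ (n : ℕ) :
    xi p φ t (n + 1 : ℕ)
      = ∑ m ∈ Icc 1 p, φ m (t - (n + 1 : ℕ) + m) * xi p φ t ((n + 1 : ℕ) - m) := by
  set f : ℕ → ℝ := fun i => φ (i + 1) (t - n + i) * xi p φ t (n - i)
  have hcol (i : Fin (n + 1)) : (-1) ^ (i : ℕ) * PhiMat p φ t (n + 1) i 0 *
      ((PhiMat p φ t (n + 1)).submatrix i.succAbove Fin.succ).det
        = if (i : ℕ) ∈ range p then f i else 0 := by
    have hi : ((n - i : ℕ) : ℤ) = n - i := by omega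
    rw [det_PhiMat_submatrix_succAbove_succ, PhiMat_apply_zero, hi]
    simp only [mem_range]
    split_ifs
    · rw [mul_mul_mul_comm, ← pow_add, Even.neg_one_pow ⟨i, rfl⟩, one_mul]
    · simp
  have hf : ∀ i ∈ range p, i ∉ range (n + 1) ∩ range p → f i = 0 := by
    intro i hi hi'
    simp only [mem_inter, mem_range] at hi hi'
    simp [f, xi_of_neg p φ t (show (n : ℤ) - i < 0 by omega)]
  rw [xi_natCast, Matrix.det_succ_column_zero, sum_congr rfl (fun i _ => hcol i),
    Fin.sum_univ_eq_sum_range (fun i => if i ∈ range p then f i else 0), sum_ite_mem,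
    sum_subset inter_subset_right hf, sum_Icc_one_eq_sum_range]
  refine sum_congr rfl fun i _ => ?_
  simp only [f]
  congr 2 <;> push_cast <;> ring

end Hessenbergian

section Predictor

variable (p : ℕ) (φ : ℕ → ℤ → ℝ) (q : ℕ) (θ : ℕ → ℤ → ℝ) (t : ℤ)

/-- The coefficient of `y_{t-N-m}`, `m ≥ 1`, in the `N`-step predictor. -/
noncomputable def arCoeff (N m : ℕ) : ℝ :=
  ∑ i ∈ Icc 1 (p - m), φ (m + i) (t - N + i) * xi p φ t ((N : ℤ) - i)

/-- The coefficient `ξ'_{t,r}` of `ε_{t-r}` in the `N`-step predictor. -/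
noncomputable def maCoeff (N r : ℕ) : ℝ :=
  ∑ j ∈ Icc (r - N + 1) q, θ j (t - r + j) * xi p φ t ((r : ℤ) - j)

/-- The coefficient `ψ_{t,r}` of `ε_{t-r}` in the expansion of `y_t` into innovations. -/
noncomputable def psiWeight (r : ℕ) : ℝ :=
  xi p φ t r + ∑ j ∈ Icc 1 q, θ j (t - r + j) * xi p φ t ((r : ℤ) - j)

noncomputable def parmaPredictor (N : ℕ) (Y E : ℤ → ℝ) : ℝ :=
  (∑ r ∈ range N, xi p φ t r * φ 0 (t - r))
    + xi p φ t N * Y (t - N)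
    + (∑ m ∈ Icc 1 (p - 1), ∑ i ∈ Icc 1 (p - m),
        φ (m + i) (t - N + i) * xi p φ t ((N : ℤ) - i) * Y (t - N - m))
    + ∑ r ∈ Icc N (N + q - 1), maCoeff p φ q θ t N r * E (t - r)

lemma arCoeff_succ_zero (N : ℕ) : arCoeff p φ t (N + 1) 0 = xi p φ t (N + 1 : ℕ) := by
  rw [arCoeff, xi_natCast_succ]
  simp

lemma arCoeff_succ {N m : ℕ} (hm : m < p) :
    arCoeff p φ t (N + 1) m = φ (m + 1) (t - N) * xi p φ t N + arCoeff p φ t N (m + 1) := by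
  rw [arCoeff, arCoeff, sum_Icc_one_eq_sum_range, sum_Icc_one_eq_sum_range,
    show p - m = p - (m + 1) + 1 by omega, sum_range_succ', add_comm]
  congr 1
  · congr 2 <;> push_cast <;> ring
  · refine sum_congr rfl fun i _ => ?_
    congr 2 <;> push_cast <;> ring

lemma maCoeff_succ {N k : ℕ} (hk : k < q) :
    maCoeff p φ q θ t (N + 1) (N + 1 + k)
      = θ (k + 1) (t - N) * xi p φ t N + maCoeff p φ q θ t N (N + 1 + k) := by
  rw [maCoeff, maCoeff, show N + 1 + k - (N + 1) + 1 = k + 1 by omega,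
    show N + 1 + k - N + 1 = k + 1 + 1 by omega, ← insert_Icc_add_one_left_eq_Icc hk,
    sum_insert (by simp)]
  congr 3 <;> push_cast <;> ring

lemma arPart_succ (N : ℕ) (Y : ℤ → ℝ) :
    (∑ m ∈ Icc 1 (p - 1), ∑ i ∈ Icc 1 (p - m),
        φ (m + i) (t - N + i) * xi p φ t ((N : ℤ) - i) * Y (t - N - m))
      + xi p φ t N * ∑ m ∈ Icc 1 p, φ m (t - N) * Y (t - N - m)
    = xi p φ t (N + 1 : ℕ) * Y (t - (N + 1 : ℕ))
      + ∑ m ∈ Icc 1 (p - 1), ∑ i ∈ Icc 1 (p - m),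
          φ (m + i) (t - (N + 1 : ℕ) + i) * xi p φ t ((N + 1 : ℕ) - i)
            * Y (t - (N + 1 : ℕ) - m) := by
  obtain _ | p := p
  · rw [xi_natCast_succ]
    simp
  have hfold (M m : ℕ) : ∑ i ∈ Icc 1 (p + 1 - m), φ (m + i) (t - M + i) * xi (p + 1) φ t (M - i)
      = arCoeff (p + 1) φ t M m := rfl
  simp only [← sum_mul, hfold, Nat.add_sub_cancel, sum_Icc_one_eq_sum_range]
  calc _ = ∑ k ∈ range (p + 1), arCoeff (p + 1) φ t (N + 1) k * Y (t - (N + 1 : ℕ) - k) := by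
        rw [mul_sum, ← sum_range_succ_of_eq_zero (f := fun k =>
            arCoeff (p + 1) φ t N (k + 1) * Y (t - N - (k + 1 : ℕ))) (by simp [arCoeff]),
          ← sum_add_distrib]
        refine sum_congr rfl fun k hk => ?_
        rw [arCoeff_succ _ _ _ (mem_range.1 hk)]
        push_cast
        ring_nf
    _ = _ := by
        rw [sum_range_succ', arCoeff_succ_zero, add_comm]
        push_cast
        ring_nf

lemma maPart_succ (N : ℕ) (E : ℤ → ℝ) :
    (∑ r ∈ Icc N (N + q - 1), maCoeff p φ q θ t N r * E (t - r))
      + xi p φ t N * ∑ j ∈ Icc 1 q, θ j (t - N) * E (t - N - j)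
    = (∑ j ∈ Icc 1 q, θ j (t - N + j) * xi p φ t ((N : ℤ) - j)) * E (t - N)
      + ∑ r ∈ Icc (N + 1) (N + 1 + q - 1), maCoeff p φ q θ t (N + 1) r * E (t - r) := by
  obtain _ | q := q
  · simp [maCoeff]
  have hshift : ∑ k ∈ range (q + 1), maCoeff p φ (q + 1) θ t N (N + k) * E (t - (N + k : ℕ))
      = ∑ k ∈ range (q + 1), maCoeff p φ (q + 1) θ t N (N + 1 + k) * E (t - (N + 1 + k : ℕ))
        + (∑ j ∈ range (q + 1), θ (j + 1) (t - N + (j + 1 : ℕ)) * xi p φ t (N - (j + 1 : ℕ)))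
          * E (t - N) := by
    rw [← sum_range_succ_of_eq_zero (f := fun k =>
        maCoeff p φ (q + 1) θ t N (N + k) * E (t - (N + k : ℕ))) (by simp [maCoeff]),
      sum_range_succ']
    simp [maCoeff, sum_Icc_one_eq_sum_range, add_assoc, add_comm 1]
  rw [show N + (q + 1) - 1 = N + q by omega, show N + 1 + (q + 1) - 1 = N + 1 + q by omega,
    sum_Icc_add_eq_sum_range, sum_Icc_add_eq_sum_range, sum_Icc_one_eq_sum_range,
    sum_Icc_one_eq_sum_range, hshift, mul_sum, add_right_comm, ← sum_add_distrib, add_comm]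
  congr 1
  refine sum_congr rfl fun k hk => ?_
  rw [maCoeff_succ _ _ _ _ _ (mem_range.1 hk)]
  push_cast
  ring_nf

lemma parmaPredictor_zero (Y E : ℤ → ℝ) : parmaPredictor p φ q θ t 0 Y E = Y t := by
  have hE (r : ℕ) : maCoeff p φ q θ t 0 r = 0 :=
    sum_eq_zero fun j hj => by rw [xi_of_neg _ _ _ (by simp at hj; omega), mul_zero]
  simp only [parmaPredictor, hE, zero_mul, sum_const_zero, add_zero, range_zero, sum_empty,
    zero_add, Nat.cast_zero, sub_zero, xi_zero, one_mul, add_eq_left]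
  refine sum_eq_zero fun m _ => sum_eq_zero fun i hi => ?_
  rw [xi_of_neg _ _ _ (by simp at hi; omega), mul_zero, zero_mul]

lemma parmaPredictor_succ {N : ℕ} {Y E : ℤ → ℝ}
    (h : Y (t - N) = φ 0 (t - N) + ∑ m ∈ Icc 1 p, φ m (t - N) * Y (t - N - m)
      + (E (t - N) + ∑ j ∈ Icc 1 q, θ j (t - N) * E (t - N - j))) :
    parmaPredictor p φ q θ t N Y E
      = parmaPredictor p φ q θ t (N + 1) Y E + psiWeight p φ q θ t N * E (t - N) := by
  rw [parmaPredictor, parmaPredictor, psiWeight, h]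
  linear_combination arPart_succ p φ t N Y + maPart_succ p φ q θ t N E
    - sum_range_succ (fun r => xi p φ t r * φ 0 (t - r)) N

lemma eq_parmaPredictor_add_sum_psiWeight {Y E : ℤ → ℝ}
    (h : ∀ τ, Y τ = φ 0 τ + ∑ m ∈ Icc 1 p, φ m τ * Y (τ - m)
      + (E τ + ∑ j ∈ Icc 1 q, θ j τ * E (τ - j))) (N : ℕ) :
    Y t = parmaPredictor p φ q θ t N Y E
      + ∑ r ∈ range N, psiWeight p φ q θ t r * E (t - r) := by
  induction N with
  | zero => simp [parmaPredictor_zero]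
  | succ N ih => rw [ih, parmaPredictor_succ p φ q θ t (h _), sum_range_succ]; ring

lemma stronglyMeasurable_parmaPredictor (N : ℕ) {Ω : Type*} {m : MeasurableSpace Ω}
    {Y E : ℤ → Ω → ℝ}
    (hY : ∀ τ ≤ t - N, StronglyMeasurable[m] (Y τ))
    (hE : ∀ τ ≤ t - N, StronglyMeasurable[m] (E τ)) :
    StronglyMeasurable[m] fun ω => parmaPredictor p φ q θ t N (Y · ω) (E · ω) := by
  refine ((stronglyMeasurable_const.add ((hY _ le_rfl).const_mul _)).add ?_).add ?_
  · exact Finset.stronglyMeasurable_fun_sum _ fun m _ =>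
      Finset.stronglyMeasurable_fun_sum _ fun i _ => (hY _ (by omega)).const_mul _
  · exact Finset.stronglyMeasurable_fun_sum _ fun r hr =>
      (hE _ (by simp only [mem_Icc] at hr; omega)).const_mul _

end Predictor

section CondExp

variable {Ω : Type*} {m m' m0 : MeasurableSpace Ω} {μ : Measure Ω}

lemma condExp_ae_eq_zero_of_le (hmm' : m ≤ m') (hm' : m' ≤ m0) [SigmaFinite (μ.trim hm')]
    {f : Ω → ℝ} (hf : μ[f | m'] =ᵐ[μ] 0) : μ[f | m] =ᵐ[μ] 0 :=
  calc μ[f | m] =ᵐ[μ] μ[μ[f | m'] | m] := (condExp_condExp_of_le hmm' hm').symm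
    _ =ᵐ[μ] μ[0 | m] := condExp_congr_ae hf
    _ = 0 := condExp_zero

lemma condExp_sum_smul_ae_eq_zero {ι : Type*} (s : Finset ι) {f : ι → Ω → ℝ}
    (hf : ∀ i ∈ s, Integrable (f i) μ) (hf0 : ∀ i ∈ s, μ[f i | m] =ᵐ[μ] 0) (c : ι → ℝ) :
    μ[∑ i ∈ s, c i • f i | m] =ᵐ[μ] 0 := by
  refine (condExp_finsetSum (fun i hi => (hf i hi).smul (c i)) m).trans ?_
  have h : ∀ᵐ ω ∂μ, ∀ i ∈ s, μ[c i • f i | m] ω = 0 := by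
    refine (eventually_all_finset s).2 fun i hi => ?_
    filter_upwards [condExp_smul (c i) (f i) m, hf0 i hi] with ω h1 h2
    simp [h1, h2]
  filter_upwards [h] with ω hω
  simp [Finset.sum_apply, sum_eq_zero hω]

lemma condExp_ae_eq_of_ae_eq_add (hm : m ≤ m0) [SigmaFinite (μ.trim hm)] {X W Z : Ω → ℝ}
    (hX : StronglyMeasurable[m] X) (hZ : Integrable Z μ) (hW : Integrable W μ)
    (hW0 : μ[W | m] =ᵐ[μ] 0) (hZXW : Z =ᵐ[μ] X + W) : μ[Z | m] =ᵐ[μ] X := by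
  have hXi : Integrable X μ :=
    (hZ.sub hW).congr (by filter_upwards [hZXW] with ω h; simp [h])
  calc μ[Z | m] =ᵐ[μ] μ[X + W | m] := condExp_congr_ae hZXW
    _ =ᵐ[μ] μ[X | m] + μ[W | m] := condExp_add hXi hW m
    _ =ᵐ[μ] X + 0 := by
        rw [condExp_of_stronglyMeasurable hm hX hXi]
        exact (EventuallyEq.refl _ X).add hW0
    _ = X := add_zero X

end CondExp

theorem parma_optimal_predictor_general
    (p : ℕ) (φ : ℕ → ℤ → ℝ)
    (q : ℕ) (θ : ℕ → ℤ → ℝ)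
    {Ω : Type*} {m0 : MeasurableSpace Ω} {μ : Measure Ω} [IsProbabilityMeasure μ]
    (𝓕 : Filtration ℤ m0)
    (ε : ℤ → Ω → ℝ)
    (hεmeas : ∀ τ : ℤ, StronglyMeasurable[𝓕 τ] (ε τ))
    (hεL2 : ∀ τ : ℤ, MemLp (ε τ) 2 μ)
    (hεmart : ∀ τ : ℤ, μ[ε τ | 𝓕 (τ - 1)] =ᵐ[μ] 0)
    (y : ℤ → Ω → ℝ)
    (hymeas : ∀ τ : ℤ, StronglyMeasurable[𝓕 τ] (y τ))
    (hyint : ∀ τ : ℤ, Integrable (y τ) μ)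
    (u : ℤ → Ω → ℝ)
    (hu : ∀ τ : ℤ, ∀ ω, u τ ω = ε τ ω + ∑ j ∈ Finset.Icc 1 q, θ j τ * ε (τ - j) ω)
    (hy : ∀ τ : ℤ, y τ =ᵐ[μ] fun ω =>
      φ 0 τ + (∑ m ∈ Finset.Icc 1 p, φ m τ * y (τ - m) ω) + u τ ω)
    (t : ℤ) (N : ℕ) :
    μ[y t | 𝓕 (t - N)] =ᵐ[μ] fun ω =>
      (∑ r ∈ Finset.range N, xi p φ t r * φ 0 (t - r))
      + xi p φ t N * y (t - N) ω
      + (∑ m ∈ Finset.Icc 1 (p - 1), ∑ i ∈ Finset.Icc 1 (p - m),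
          φ (m + i) (t - N + i) * xi p φ t ((N : ℤ) - i) * y (t - N - m) ω)
      + ∑ r ∈ Finset.Icc N (N + q - 1),
          (∑ j ∈ Finset.Icc (r - N + 1) q,
            θ j (t - r + j) * xi p φ t ((r : ℤ) - j)) * ε (t - r) ω := by
  have hεint (τ : ℤ) : Integrable (ε τ) μ := (hεL2 τ).integrable one_le_two
  have hpath : y t =ᵐ[μ] (fun ω => parmaPredictor p φ q θ t N (y · ω) (ε · ω))
      + ∑ r ∈ range N, psiWeight p φ q θ t r • ε (t - r) := by
    filter_upwards [ae_all_iff.2 hy] with ω hω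
    simp only [Pi.add_apply, Finset.sum_apply, Pi.smul_apply, smul_eq_mul]
    exact eq_parmaPredictor_add_sum_psiWeight p φ q θ t (fun τ => (hω τ).trans (by rw [hu])) N
  refine condExp_ae_eq_of_ae_eq_add (𝓕.le _)
    (X := fun ω => parmaPredictor p φ q θ t N (y · ω) (ε · ω))
    (W := ∑ r ∈ range N, psiWeight p φ q θ t r • ε (t - r))
    (stronglyMeasurable_parmaPredictor p φ q θ t N
      (fun τ hτ => (hymeas τ).mono (𝓕.mono hτ)) (fun τ hτ => (hεmeas τ).mono (𝓕.mono hτ)))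
    (hyint t) (integrable_finsetSum' _ fun r _ => (hεint _).smul _)
    (condExp_sum_smul_ae_eq_zero _ (fun r _ => hεint _) (fun r hr => ?_) _) hpath
  exact condExp_ae_eq_zero_of_le (𝓕.mono (by simp at hr; omega)) (𝓕.le _) (hεmart _)

/-- The `N`-step-ahead optimal linear predictor of a PARMA(`p,q`) process. -/
theorem parma_optimal_predictor
    (p : ℕ) (hp : 1 ≤ p) (φ : ℕ → ℤ → ℝ)
    (q : ℕ) (hq : 1 ≤ q) (θ : ℕ → ℤ → ℝ)
    {Ω : Type*} {m0 : MeasurableSpace Ω} {μ : Measure Ω} [IsProbabilityMeasure μ]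
    (𝓕 : Filtration ℤ m0)
    (ε : ℤ → Ω → ℝ)
    (hεmeas : ∀ τ : ℤ, StronglyMeasurable[𝓕 τ] (ε τ))
    (hεL2 : ∀ τ : ℤ, MemLp (ε τ) 2 μ)
    (hεmart : ∀ τ : ℤ, μ[ε τ | 𝓕 (τ - 1)] =ᵐ[μ] 0)
    (y : ℤ → Ω → ℝ)
    (hymeas : ∀ τ : ℤ, StronglyMeasurable[𝓕 τ] (y τ))
    (hyint : ∀ τ : ℤ, Integrable (y τ) μ)
    (u : ℤ → Ω → ℝ)
    (hu : ∀ τ : ℤ, ∀ ω, u τ ω = ε τ ω + ∑ j ∈ Finset.Icc 1 q, θ j τ * ε (τ - j) ω)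
    (hy : ∀ τ : ℤ, y τ =ᵐ[μ] fun ω =>
      φ 0 τ + (∑ m ∈ Finset.Icc 1 p, φ m τ * y (τ - m) ω) + u τ ω)
    (t : ℤ) (N : ℕ) (hN : 1 ≤ N) :
    μ[y t | 𝓕 (t - N)] =ᵐ[μ] fun ω =>
      (∑ r ∈ Finset.range N, xi p φ t r * φ 0 (t - r))
      + xi p φ t N * y (t - N) ω
      + (∑ m ∈ Finset.Icc 1 (p - 1), ∑ i ∈ Finset.Icc 1 (p - m),
          φ (m + i) (t - N + i) * xi p φ t ((N : ℤ) - i) * y (t - N - m) ω)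
      + ∑ r ∈ Finset.Icc N (N + q - 1),
          (∑ j ∈ Finset.Icc (r - N + 1) q,
            θ j (t - r + j) * xi p φ t ((r : ℤ) - j)) * ε (t - r) ω :=
  parma_optimal_predictor_general p φ q θ 𝓕 ε hεmeas hεL2 hεmart y hymeas hyint u hu hy t N
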